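/- Let n ≥ 1, 1 ≤ d ≤ n, and k ≥ 1 with k ≤ 2^n − 2^{n−d}. The fraction of functions f in P_k^n that possess at least one prime implicant of rank d is at most 2^d · C(n, d) · (k / 2^{d−1})^d. -/

import Mathlib

open scoped Classical

/-- A conjunction (term) over `n` Boolean variables: a support set `supp ⊆ Fin n`
together with a sign assignment `sgn` (only its values on `supp` matter). -/
structure Conj (n : ℕ) where
  supp : Finset (Fin n)
  sgn : Fin n → Bool

/-- The rank of a conjunction: the number of literals, i.e. `|supp|`. -/
def Conj.rank {n : ℕ} (K : Conj n) : ℕ := K.supp.card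

/-- A conjunction covers a point `x` if `x` agrees with the sign assignment on the support. -/
def Conj.covers {n : ℕ} (K : Conj n) (x : Fin n → Bool) : Prop :=
  ∀ i ∈ K.supp, x i = K.sgn i

/-- `K` is an implicant of `f` if every point covered by `K` is a one of `f`. -/
def Implicant {n : ℕ} (K : Conj n) (f : (Fin n → Bool) → Bool) : Prop :=
  ∀ x, K.covers x → f x = true

/-- `K` is a prime implicant of `f` if it is an implicant of `f` and deleting
any coordinate of its support yields a conjunction which is not an implicant of `f`. -/
def PrimeImplicant {n : ℕ} (K : Conj n) (f : (Fin n → Bool) → Bool) : Prop :=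
  Implicant K f ∧ ∀ i ∈ K.supp, ¬ Implicant ⟨K.supp.erase i, K.sgn⟩ f

/-- The number of zeros of a Boolean function on `n` variables. -/
def zerosCard {n : ℕ} (f : (Fin n → Bool) → Bool) : ℕ :=
  (Finset.univ.filter (fun x => f x = false)).card

/-- `P_k^n`: the (finite) class of Boolean functions on `n` variables with exactly `k` zeros. -/
def Pclass (n k : ℕ) : Finset ((Fin n → Bool) → Bool) :=
  Finset.univ.filter (fun f => zerosCard f = k)

/-- `D` is a DNF realization of `f`: `f x = true` iff some conjunction of `D` covers `x`. -/
def IsDNF {n : ℕ} (f : (Fin n → Bool) → Bool) (D : Finset (Conj n)) : Prop :=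
  ∀ x, f x = true ↔ ∃ K ∈ D, K.covers x

/-- The fraction of functions in `P_k^n` satisfying property `P`. -/
noncomputable def frac (n k : ℕ) (P : ((Fin n → Bool) → Bool) → Prop) : ℝ :=
  (((Pclass n k).filter P).card : ℝ) / ((Pclass n k).card : ℝ)

/-!
If `K` is a prime implicant of rank `d` of `f ∈ P_k^n`, the zeros of `f` avoid the subcube of `K`
but meet each of the `d` neighbouring subcubes obtained by negating one literal of `K`; these are
pairwise disjoint of size `2 ^ (n - d)`. So at most `(2 ^ (n - d)) ^ d · C(M, k - d)` functions of
`P_k^n` have `K` as a prime implicant, where `M = 2 ^ n - 2 ^ (n - d)`. Summing over the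
`C(n, d) · 2 ^ d` conjunctions of rank `d` and dividing by `|P_k^n| = C(2 ^ n, k)` gives the bound via
`C(M, k - d) · (M - k + 1) ^ d ≤ C(M, k) · k ^ d` and `2 ^ (n - 1) ≤ M - k + 1`, the latter valid
for `k ≤ 2 ^ (d - 1)`; for larger `k` the right-hand side is at least `1`.
-/

open Finset

section HittingSets

variable {ι α : Type*} [DecidableEq α]

theorem card_le_card_of_forall_inter_nonempty {S : Finset ι} {A : ι → Finset α} {Z : Finset α}
    (hA : (S : Set ι).PairwiseDisjoint A) (hZ : ∀ i ∈ S, (Z ∩ A i).Nonempty) : #S ≤ #Z :=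
  calc #S = ∑ i ∈ S, 1 := by simp
    _ ≤ ∑ i ∈ S, #(Z ∩ A i) := sum_le_sum fun i hi => (hZ i hi).card_pos
    _ = #(S.biUnion fun i => Z ∩ A i) :=
      (card_biUnion (hA.mono fun _ => inter_subset_right)).symm
    _ ≤ #Z := card_le_card (biUnion_subset.2 fun _ _ => inter_subset_left)

def hittingSets (U : Finset α) (A : ι → Finset α) (S : Finset ι) (k : ℕ) : Finset (Finset α) :=
  {Z ∈ U.powersetCard k | ∀ i ∈ S, (Z ∩ A i).Nonempty}

theorem mem_hittingSets {U Z : Finset α} {A : ι → Finset α} {S : Finset ι} {k : ℕ} :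
    Z ∈ hittingSets U A S k ↔ (Z ⊆ U ∧ #Z = k) ∧ ∀ i ∈ S, (Z ∩ A i).Nonempty := by
  rw [hittingSets, mem_filter, mem_powersetCard]

/-- Each hitting set for `insert j S` is `insert x Z'` with `x ∈ A j` and `Z'` a hitting set
for `S`, one size smaller. -/
theorem card_hittingSets_le [DecidableEq ι] (U : Finset α) (A : ι → Finset α)
    (S : Finset ι) (hA : (S : Set ι).PairwiseDisjoint A) (k : ℕ) :
    #(hittingSets U A S k) ≤ (∏ i ∈ S, #(A i)) * (#U).choose (k - #S) := by
  induction S using Finset.induction_on generalizing k with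
  | empty => simp [hittingSets]
  | insert j S hj ih =>
    rw [coe_insert, Set.pairwiseDisjoint_insert] at hA
    calc _ ≤ #(A j ×ˢ hittingSets U A S (k - 1)) := by
          refine card_le_card_of_surjOn (fun p => insert p.1 p.2) fun Z hZ => ?_
          rw [mem_coe, mem_hittingSets, forall_mem_insert] at hZ
          obtain ⟨⟨hZU, rfl⟩, ⟨x, hx⟩, hZS⟩ := hZ
          obtain ⟨hxZ, hxj⟩ := mem_inter.1 hx
          refine ⟨(x, Z.erase x), mem_product.2 ⟨hxj, mem_hittingSets.2
            ⟨⟨(erase_subset x Z).trans hZU, card_erase_of_mem hxZ⟩, fun i hi => ?_⟩⟩,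
            insert_erase hxZ⟩
          obtain ⟨y, hy⟩ := hZS i hi
          obtain ⟨hyZ, hyi⟩ := mem_inter.1 hy
          have hyx : y ≠ x := fun h =>
            disjoint_left.1 (hA.2 i hi (ne_of_mem_of_not_mem hi hj).symm) (h ▸ hxj) hyi
          exact ⟨y, mem_inter.2 ⟨mem_erase.2 ⟨hyx, hyZ⟩, hyi⟩⟩
      _ ≤ #(A j) * ((∏ i ∈ S, #(A i)) * (#U).choose (k - 1 - #S)) := by
          rw [card_product]; gcongr; exact ih hA.1 _
      _ = _ := by rw [prod_insert hj, card_insert_of_notMem hj, Nat.sub_sub, add_comm 1]; ring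

end HittingSets

theorem card_filter_forall_mem_eq {ι β : Type*} [Fintype ι] [DecidableEq ι] [Fintype β]
    [DecidableEq β] (S : Finset ι) (τ : ι → β) :
    #{x : ι → β | ∀ i ∈ S, x i = τ i} = Fintype.card β ^ (Fintype.card ι - #S) := by
  have : ({x : ι → β | ∀ i ∈ S, x i = τ i} : Finset _) =
      Fintype.piFinset fun i => if i ∈ S then {τ i} else univ := by
    ext x; simp only [mem_filter, mem_univ, true_and, Fintype.mem_piFinset]
    refine ⟨fun h i => ?_, fun h i hi => by simpa [hi] using h i⟩
    split_ifs with hi <;> simp [h i, hi]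
  rw [this, Fintype.card_piFinset, ← card_compl]
  simp only [apply_ite card, card_singleton, card_univ, prod_ite, prod_const_one, one_mul,
    prod_const]
  congr 2; ext; simp

variable {n : ℕ}

namespace Conj

def cube (K : Conj n) : Finset (Fin n → Bool) := {x | ∀ i ∈ K.supp, x i = K.sgn i}

@[simp]
theorem mem_cube {K : Conj n} {x : Fin n → Bool} : x ∈ K.cube ↔ K.covers x := by
  simp [cube, covers]

theorem card_cube (K : Conj n) : #K.cube = 2 ^ (n - K.rank) := by
  convert card_filter_forall_mem_eq K.supp K.sgn using 2
  · ext; simp [cube]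
  · simp
  · simp [rank]

/-- The neighbouring subcube of `K` across its face `i`. -/
def flip (K : Conj n) (i : Fin n) : Conj n := ⟨K.supp, Function.update K.sgn i (!K.sgn i)⟩

theorem pairwiseDisjoint_cube_flip (K : Conj n) :
    (K.supp : Set (Fin n)).PairwiseDisjoint fun i => (K.flip i).cube := by
  intro i hi j hj hij
  refine disjoint_left.2 fun x hxi hxj => ?_
  have h1 := (mem_cube.1 hxi) i hi
  have h2 := (mem_cube.1 hxj) i hi
  simp only [flip, Function.update_self, Function.update_of_ne hij] at h1 h2
  simp [h1] at h2

theorem covers_mk_congr {S T : Finset (Fin n)} {σ τ : Fin n → Bool} (hTS : T ⊆ S)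
    (h : ∀ i ∈ S, σ i = τ i) : (Conj.mk T σ).covers = (Conj.mk T τ).covers :=
  funext fun _ => propext <| forall₂_congr fun i hi => by dsimp only; rw [h i (hTS hi)]

end Conj

theorem primeImplicant_mk_congr {S : Finset (Fin n)} {σ τ : Fin n → Bool}
    (h : ∀ i ∈ S, σ i = τ i) (f : (Fin n → Bool) → Bool) :
    PrimeImplicant ⟨S, σ⟩ f ↔ PrimeImplicant ⟨S, τ⟩ f := by
  unfold PrimeImplicant Implicant
  rw [Conj.covers_mk_congr subset_rfl h]
  exact and_congr Iff.rfl <| forall₂_congr fun i _ => by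
    rw [Conj.covers_mk_congr (erase_subset i S) h]

def zeroSet (f : (Fin n → Bool) → Bool) : Finset (Fin n → Bool) := {x | f x = false}

theorem zeroSet_injective : Function.Injective (zeroSet (n := n)) := by
  intro f g h
  funext x
  have hx := congrArg (x ∈ ·) h
  simp only [zeroSet, mem_filter, mem_univ, true_and, eq_iff_iff] at hx
  cases hf : f x <;> cases hg : g x <;> simp_all

theorem mem_Pclass {k : ℕ} {f : (Fin n → Bool) → Bool} : f ∈ Pclass n k ↔ zerosCard f = k := by
  simp [Pclass]

theorem card_Pclass (n k : ℕ) : #(Pclass n k) = (2 ^ n).choose k := by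
  have : 2 ^ n = #(univ : Finset (Fin n → Bool)) := by simp
  rw [this, ← card_powersetCard]
  refine card_nbij' zeroSet (fun Z x => decide (x ∉ Z)) ?_ ?_ ?_ ?_
  · intro f hf
    exact mem_powersetCard.2 ⟨subset_univ _, mem_Pclass.1 hf⟩
  · intro Z hZ
    exact mem_Pclass.2 (by simpa [zerosCard] using hZ)
  · intro f _
    funext x
    simp [zeroSet]
  · intro Z _
    ext x
    simp [zeroSet]

theorem PrimeImplicant.inter_cube_flip_nonempty {K : Conj n} {f : (Fin n → Bool) → Bool}
    (h : PrimeImplicant K f) {i : Fin n} (hi : i ∈ K.supp) :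
    (zeroSet f ∩ (K.flip i).cube).Nonempty := by
  obtain ⟨x, hx, hfx⟩ : ∃ x, Conj.covers ⟨K.supp.erase i, K.sgn⟩ x ∧ f x = false := by
    simpa [Implicant] using h.2 i hi
  have hxi : x i = !K.sgn i := by
    by_contra hne
    have hK : K.covers x := fun j hj => by
      by_cases hji : j = i
      · subst hji; simpa using hne
      · exact hx j (mem_erase.2 ⟨hji, hj⟩)
    simp [h.1 x hK] at hfx
  refine ⟨x, mem_inter.2 ⟨by simpa [zeroSet] using hfx, ?_⟩⟩
  refine Conj.mem_cube.2 fun j hj => ?_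
  by_cases hji : j = i
  · subst hji; simpa [Conj.flip] using hxi
  · simp only [Conj.flip, Function.update_of_ne hji]; exact hx j (mem_erase.2 ⟨hji, hj⟩)

theorem PrimeImplicant.rank_le_zerosCard {K : Conj n} {f : (Fin n → Bool) → Bool}
    (h : PrimeImplicant K f) : K.rank ≤ zerosCard f :=
  card_le_card_of_forall_inter_nonempty K.pairwiseDisjoint_cube_flip
    fun _ hi => h.inter_cube_flip_nonempty hi

theorem card_filter_primeImplicant_le (K : Conj n) (k : ℕ) :
    #{f ∈ Pclass n k | PrimeImplicant K f} ≤
      (2 ^ (n - K.rank)) ^ K.rank * (2 ^ n - 2 ^ (n - K.rank)).choose (k - K.rank) := by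
  calc _ ≤ #(hittingSets K.cubeᶜ (fun i => (K.flip i).cube) K.supp k) := by
        refine card_le_card_of_injOn zeroSet (fun f hf => ?_) zeroSet_injective.injOn
        obtain ⟨hfk, hK⟩ := mem_filter.1 hf
        refine mem_hittingSets.2 ⟨⟨fun x hx => ?_, mem_Pclass.1 hfk⟩,
          fun i hi => hK.inter_cube_flip_nonempty hi⟩
        have hfx : f x = false := by simpa [zeroSet] using hx
        exact mem_compl.2 fun hxK => by simp [hK.1 x (Conj.mem_cube.1 hxK)] at hfx
    _ ≤ _ := by
        refine (card_hittingSets_le _ _ _ K.pairwiseDisjoint_cube_flip k).trans_eq ?_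
        simp [Conj.card_cube, card_compl, Conj.flip, Conj.rank]

/-- Only the signs on the support matter, so it suffices to let the signs range over the
`2 ^ d` vectors that vanish off the support. -/
theorem card_filter_exists_primeImplicant_le (n d k : ℕ) :
    #{f ∈ Pclass n k | ∃ K : Conj n, K.rank = d ∧ PrimeImplicant K f} ≤
      n.choose d * (2 ^ d * ((2 ^ (n - d)) ^ d * (2 ^ n - 2 ^ (n - d)).choose (k - d))) := by
  set signs : Finset (Fin n) → Finset (Fin n → Bool) := fun S => (Conj.mk Sᶜ fun _ => false).cube
  have hcover : {f ∈ Pclass n k | ∃ K : Conj n, K.rank = d ∧ PrimeImplicant K f} ⊆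
      (univ.powersetCard d).biUnion fun S =>
        (signs S).biUnion fun σ => {f ∈ Pclass n k | PrimeImplicant ⟨S, σ⟩ f} := by
    intro f hf
    obtain ⟨hfk, ⟨S, σ⟩, hS, hK⟩ := mem_filter.1 hf
    refine mem_biUnion.2 ⟨S, mem_powersetCard.2 ⟨subset_univ S, hS⟩,
      mem_biUnion.2 ⟨S.piecewise σ fun _ => false, ?_, mem_filter.2 ⟨hfk, ?_⟩⟩⟩
    · exact Conj.mem_cube.2 fun i hi => piecewise_eq_of_notMem _ _ _ (mem_compl.1 hi)
    · exact (primeImplicant_mk_congr (fun i hi => (piecewise_eq_of_mem _ _ _ hi).symm) f).1 hK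
  refine ((card_le_card hcover).trans (card_biUnion_le_card_mul _ _ _ fun S hS => ?_)).trans_eq
    (by rw [card_powersetCard, card_univ, Fintype.card_fin])
  obtain ⟨-, hS⟩ := mem_powersetCard.1 hS
  have hsigns : #(signs S) = 2 ^ d := by
    have hdn : d ≤ n := by simpa [hS] using card_le_univ S
    rw [Conj.card_cube, Conj.rank, card_compl, Fintype.card_fin, hS, Nat.sub_sub_self hdn]
  refine (card_biUnion_le_card_mul _ _ _ fun σ _ => ?_).trans_eq (by rw [hsigns])
  simpa [Conj.rank, hS] using card_filter_primeImplicant_le ⟨S, σ⟩ k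

theorem Nat.choose_sub_mul_pow_le {M k d : ℕ} (hdk : d ≤ k) (hkM : k ≤ M) :
    M.choose (k - d) * (M - k + 1) ^ d ≤ M.choose k * k ^ d := by
  induction d with
  | zero => simp
  | succ d ih =>
    have hstep : M.choose (k - (d + 1)) * (M - k + 1) ≤ M.choose (k - d) * (k - d) := by
      have h := Nat.choose_succ_right_eq M (k - (d + 1))
      rw [show k - (d + 1) + 1 = k - d by omega] at h
      rw [h]
      exact Nat.mul_le_mul_left _ (by omega)
    calc M.choose (k - (d + 1)) * (M - k + 1) ^ (d + 1)
        = M.choose (k - (d + 1)) * (M - k + 1) * (M - k + 1) ^ d := by ring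
      _ ≤ M.choose (k - d) * k * (M - k + 1) ^ d :=
          Nat.mul_le_mul_right _ (hstep.trans (Nat.mul_le_mul_left _ (Nat.sub_le k d)))
      _ = M.choose (k - d) * (M - k + 1) ^ d * k := by ring
      _ ≤ M.choose k * k ^ d * k := Nat.mul_le_mul_right _ (ih (by omega))
      _ = M.choose k * k ^ (d + 1) := by ring

theorem card_filter_exists_primeImplicant_mul_le {n d k : ℕ} (hd : 1 ≤ d) (hdn : d ≤ n)
    (hk : k ≤ 2 ^ (d - 1)) (hkM : k ≤ 2 ^ n - 2 ^ (n - d)) :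
    #{f ∈ Pclass n k | ∃ K : Conj n, K.rank = d ∧ PrimeImplicant K f} * (2 ^ (d - 1)) ^ d ≤
      2 ^ d * n.choose d * (k ^ d * (2 ^ n).choose k) := by
  rcases lt_or_ge k d with hkd | hdk
  · rw [filter_eq_empty_iff.2 fun f hf ⟨K, hK, hPI⟩ => by
      have := hPI.rank_le_zerosCard; rw [mem_Pclass.1 hf] at this; omega]
    simp
  set M := 2 ^ n - 2 ^ (n - d)
  have hsplit : 2 ^ (n - d) * 2 ^ (d - 1) = 2 ^ (n - 1) := by
    rw [← pow_add]; congr 1; omega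
  have hhalf : 2 ^ (n - 1) * 2 = 2 ^ n := by
    rw [← pow_succ]; congr 1; omega
  have hM : 2 ^ (n - 1) ≤ M - k + 1 := by
    have ha : 1 ≤ 2 ^ (n - d) := Nat.one_le_two_pow
    have hb : 1 ≤ 2 ^ (d - 1) := Nat.one_le_two_pow
    have : 2 ^ (n - d) + 2 ^ (d - 1) ≤ 2 ^ (n - d) * 2 ^ (d - 1) + 1 := by nlinarith
    omega
  exact calc _ ≤ n.choose d * (2 ^ d * ((2 ^ (n - d)) ^ d * M.choose (k - d))) * (2 ^ (d - 1)) ^ d :=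
        Nat.mul_le_mul_right _ (card_filter_exists_primeImplicant_le n d k)
    _ = 2 ^ d * n.choose d * (M.choose (k - d) * (2 ^ (n - d) * 2 ^ (d - 1)) ^ d) := by ring
    _ ≤ 2 ^ d * n.choose d * (M.choose (k - d) * (M - k + 1) ^ d) := by rw [hsplit]; gcongr
    _ ≤ 2 ^ d * n.choose d * (M.choose k * k ^ d) :=
        Nat.mul_le_mul_left _ (Nat.choose_sub_mul_pow_le hdk hkM)
    _ ≤ 2 ^ d * n.choose d * (k ^ d * (2 ^ n).choose k) := by
        rw [mul_comm (M.choose k)]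
        exact Nat.mul_le_mul_left _ (Nat.mul_le_mul_left _ (Nat.choose_le_choose k (Nat.sub_le _ _)))

theorem frac_le_one (n k : ℕ) (P : ((Fin n → Bool) → Bool) → Prop) : frac n k P ≤ 1 :=
  div_le_one_of_le₀ (by exact_mod_cast card_filter_le _ _) (by positivity)

theorem stmt2_general (n d k : ℕ) (hd1 : 1 ≤ d) (hdn : d ≤ n)
    (hk2 : k ≤ 2 ^ n - 2 ^ (n - d)) :
    frac n k (fun f => ∃ K : Conj n, K.rank = d ∧ PrimeImplicant K f) ≤
      (2 : ℝ) ^ d * (Nat.choose n d : ℝ) * ((k : ℝ) / 2 ^ (d - 1)) ^ d := by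
  rcases le_or_gt (2 ^ (d - 1)) k with hk | hk
  · refine (frac_le_one _ _ _).trans (one_le_mul_of_one_le_of_one_le
      (one_le_mul_of_one_le_of_one_le (one_le_pow₀ one_le_two) ?_) (one_le_pow₀ ?_))
    · exact_mod_cast Nat.choose_pos hdn
    · rw [one_le_div (by positivity)]; exact_mod_cast hk
  have key := card_filter_exists_primeImplicant_mul_le hd1 hdn hk.le hk2
  rw [frac, card_Pclass]
  refine div_le_of_le_mul₀ (by positivity) (by positivity) ?_
  rw [div_pow, mul_div_assoc', div_mul_eq_mul_div, le_div_iff₀ (by positivity)]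
  exact_mod_cast key.trans_eq (by ring)

/-- The fraction of functions in `P_k^n` possessing at least one prime implicant
of rank `d` is at most `2^d · C(n, d) · (k / 2^(d−1))^d`. -/
theorem stmt2 (n d k : ℕ) (hn : 1 ≤ n) (hd1 : 1 ≤ d) (hdn : d ≤ n)
    (hk1 : 1 ≤ k) (hk2 : k ≤ 2 ^ n - 2 ^ (n - d)) :
    frac n k (fun f => ∃ K : Conj n, K.rank = d ∧ PrimeImplicant K f) ≤
      (2 : ℝ) ^ d * (Nat.choose n d : ℝ) * ((k : ℝ) / 2 ^ (d - 1)) ^ d :=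
  stmt2_general n d k hd1 hdn hk2
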